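/- arXiv:1312.1675 — 4 statements merged into one kernel-verified Lean document; each statement's English description precedes it below -/
import Mathlib

section
/- Let κ₀ > 0 and γ : [0,L] → ℂ be a curve parametrized by arc length with γ(0) = 0, γ'(0) = 1, and whose tangent-angle function θ (with θ(0) = 0 and γ'(s) = e^{iθ(s)}) is κ₀-Lipschitz. Fix α ∈ (0,π) and let A be the line through i/κ₀ with direction −i·e^{iα}. If γ(L) ∈ A, then L ≥ α/κ₀. -/
/-!
Rotate by `e^{-iα}`: `f s = Re (e^{-iα} γ s)` equals `sin α / κ₀` exactly on `A`, vanishes at `0`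
and has derivative `cos (θ s - α)`. If `κ₀ L < α`, the bound `|θ s| ≤ κ₀ s` gives
`cos (θ s - α) ≤ cos (α - κ₀ s)`, the corresponding derivative for the extremal circle of radius
`1/κ₀`; comparing derivatives, `f L ≤ (sin α - sin (α - κ₀ L)) / κ₀ < sin α / κ₀`.
-/

open Real Set

theorem Real.cos_le_cos_of_le_of_le_two_pi_sub {x y : ℝ} (hy₀ : 0 ≤ y) (hyx : y ≤ x)
    (hx : x ≤ 2 * π - y) : cos x ≤ cos y := by
  rcases le_or_gt x π with hxπ | hxπ
  · exact cos_le_cos_of_nonneg_of_le_pi hy₀ hxπ hyx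
  · rw [← cos_two_pi_sub x]
    exact cos_le_cos_of_nonneg_of_le_pi hy₀ (by linarith) (by linarith)

theorem Real.cos_sub_le_cos_sub_of_abs_le {θ α c : ℝ} (hθ : |θ| ≤ c) (hcα : c ≤ α)
    (hαπ : α ≤ π) : cos (θ - α) ≤ cos (α - c) := by
  obtain ⟨hθ₁, hθ₂⟩ := abs_le.mp hθ
  rw [← cos_neg, neg_sub]
  exact cos_le_cos_of_le_of_le_two_pi_sub (by linarith) (by linarith) (by linarith)

theorem sub_le_sub_of_hasDerivAt_le {f g f' g' : ℝ → ℝ} {a b : ℝ} (hab : a ≤ b)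
    (hf : ∀ x ∈ Icc a b, HasDerivAt f (f' x) x) (hg : ∀ x ∈ Icc a b, HasDerivAt g (g' x) x)
    (hle : ∀ x ∈ Icc a b, f' x ≤ g' x) : f b - f a ≤ g b - g a := by
  have key := image_le_of_deriv_right_le_deriv_boundary (B := fun x => g x - g a + f a)
    (fun x hx => (hf x hx).continuousAt.continuousWithinAt)
    (fun x hx => (hf x (Ico_subset_Icc_self hx)).hasDerivWithinAt) (by simp)
    (fun x hx => ((hg x hx).continuousAt.sub continuousAt_const).add
      continuousAt_const |>.continuousWithinAt)
    (fun x hx => (((hg x (Ico_subset_Icc_self hx)).sub_const (g a)).add_const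
      (f a)).hasDerivWithinAt)
    (fun x hx => hle x (Ico_subset_Icc_self hx)) (right_mem_Icc.mpr hab)
  linarith

open Complex in
theorem re_exp_neg_mul_I_mul_eq_sin_div (κ α t : ℝ) :
    (exp (-(α : ℂ) * I) * (I / (κ : ℂ) + (t : ℂ) * (-I * exp ((α : ℂ) * I)))).re
      = Real.sin α / κ := by
  have hrot : exp (-(α : ℂ) * I) * exp ((α : ℂ) * I) = 1 := by
    rw [← Complex.exp_add]; simp
  have hrotated : exp (-(α : ℂ) * I) * (I / (κ : ℂ) + (t : ℂ) * (-I * exp ((α : ℂ) * I)))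
      = exp (((-α : ℝ) : ℂ) * I) * I / κ - t * I := by
    push_cast
    linear_combination (-(t : ℂ) * I) * hrot
  rw [hrotated, sub_re, div_ofReal_re, mul_I_re, exp_ofReal_mul_I_im]
  simp

theorem HasDerivAt.re_exp_neg_mul_I_mul {γ : ℝ → ℂ} {θ α s : ℝ}
    (h : HasDerivAt γ (Complex.exp ((θ : ℂ) * Complex.I)) s) :
    HasDerivAt (fun s => (Complex.exp (-(α : ℂ) * Complex.I) * γ s).re) (Real.cos (θ - α)) s := by
  have hrot : Complex.exp (-(α : ℂ) * Complex.I) * Complex.exp ((θ : ℂ) * Complex.I)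
      = Complex.exp (((θ - α : ℝ) : ℂ) * Complex.I) := by
    rw [← Complex.exp_add]; push_cast; ring_nf
  refine (Complex.reCLM.hasFDerivAt.comp_hasDerivAt s (h.const_mul _)).congr_deriv ?_
  rw [Complex.reCLM_apply, hrot, Complex.exp_ofReal_mul_I_re]

/-- Lower bound for the length of a curvature-constrained curve reaching the line A
    through i/κ₀ with direction −i·e^{iα}: if γ is arc-length parametrized with
    γ(0)=0, γ'(0)=1 (θ(0)=0), θ is κ₀-Lipschitz and γ(L) ∈ A with α ∈ (0,π),
    then L ≥ α/κ₀. -/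
theorem stmt5 (κ₀ L α : ℝ) (hκ : 0 < κ₀) (hL : 0 ≤ L) (hα : α ∈ Set.Ioo 0 Real.pi)
    (γ : ℝ → ℂ) (θ : ℝ → ℝ)
    (hγ0 : γ 0 = 0) (hθ0 : θ 0 = 0)
    (hlip : ∀ s₁ ∈ Set.Icc 0 L, ∀ s₂ ∈ Set.Icc 0 L, |θ s₁ - θ s₂| ≤ κ₀ * |s₁ - s₂|)
    (hγ : ∀ s ∈ Set.Icc 0 L, HasDerivAt γ (Complex.exp ((θ s : ℂ) * Complex.I)) s)
    (hend : ∃ t : ℝ, γ L = Complex.I / (κ₀ : ℂ)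
      + (t : ℂ) * (-Complex.I * Complex.exp ((α : ℂ) * Complex.I))) :
    α / κ₀ ≤ L := by
  obtain ⟨hα₀, hαπ⟩ := hα
  obtain ⟨t, ht⟩ := hend
  by_contra! hshort
  have hκL : κ₀ * L < α := (lt_div_iff₀' hκ).mp hshort
  set f : ℝ → ℝ := fun s => (Complex.exp (-(α : ℂ) * Complex.I) * γ s).re
  have hf0 : f 0 = 0 := by simp [f, hγ0]
  have hfL : f L = sin α / κ₀ := by simp only [f, ht, re_exp_neg_mul_I_mul_eq_sin_div]
  have hθ : ∀ s ∈ Icc 0 L, |θ s| ≤ κ₀ * s := fun s hs => by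
    simpa [hθ0, abs_of_nonneg hs.1] using hlip s hs 0 ⟨le_rfl, hL⟩
  have hcos : ∀ s ∈ Icc 0 L, cos (θ s - α) ≤ cos (α - κ₀ * s) := fun s hs =>
    cos_sub_le_cos_sub_of_abs_le (hθ s hs)
      ((mul_le_mul_of_nonneg_left hs.2 hκ.le).trans hκL.le) hαπ.le
  have hbound := sub_le_sub_of_hasDerivAt_le (f := f) (g := fun s => -sin (α - κ₀ * s) / κ₀) hL
    (fun s hs => (hγ s hs).re_exp_neg_mul_I_mul)
    (fun s _ => ((((hasDerivAt_id s).const_mul κ₀).const_sub α).sin.neg.div_const κ₀).congr_deriv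
      (by simp only [id]; field_simp))
    hcos
  have hsin : 0 < sin (α - κ₀ * L) / κ₀ :=
    div_pos (sin_pos_of_pos_of_lt_pi (by linarith) (by linarith [mul_nonneg hκ.le hL])) hκ
  rw [hfL, hf0] at hbound
  simp only [mul_zero, sub_zero, neg_div] at hbound
  linarith
end

section
/- With the hypotheses of the previous statement (κ₀ = 1, γ arc-length parametrized, γ(0)=0, γ'(0)=1, θ 1-Lipschitz with θ(0)=0, α ∈ (0,π), γ(L) on the line A through i with direction −i e^{iα}), if L = α then γ(s) = i − i e^{is} for all s ∈ [0,α]; i.e., γ is the arc of the unit circle centered at i joining 0 to i − i e^{iα}. -/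
/-!
Compare γ with the arc `σ(s) = i - i e^{is}` (`unitArc`), whose tangent angle is `s`, by
projecting onto the unit normal `i e^{iα}` of the line A: `u(s) = Re((γ(s) - σ(s)) e^{-iα})`.
The curves start together at 0 and both end on A, so `u(0) = u(α) = 0`, while
`u' = cos(θ - α) - cos(s - α) ≤ 0` because `|θ(s)| ≤ s` and `α < π`. Hence `u' = 0`, which
forces `θ(s) = s`, so γ and σ have the same derivative.
-/

open Set Real

theorem Real.cos_le_cos_of_le_of_le_two_pi_sub_s6 {a x : ℝ} (ha : 0 ≤ a) (hax : a ≤ x)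
    (hx : x ≤ 2 * π - a) : cos x ≤ cos a := by
  rcases le_or_gt x π with hxπ | hπx
  · exact cos_le_cos_of_nonneg_of_le_pi ha hxπ hax
  · rw [← cos_two_pi_sub]
    exact cos_le_cos_of_nonneg_of_le_pi ha (by linarith) (by linarith)

theorem Real.eq_of_cos_eq_of_le_of_lt_two_pi_sub {a x : ℝ} (ha : 0 ≤ a) (hax : a ≤ x)
    (hx : x < 2 * π - a) (h : cos x = cos a) : x = a := by
  rcases le_or_gt x π with hxπ | hπx
  · exact injOn_cos ⟨by linarith, hxπ⟩ ⟨ha, by linarith⟩ h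
  · rw [← cos_two_pi_sub] at h
    have := injOn_cos ⟨by linarith, by linarith⟩ ⟨ha, by linarith⟩ h
    linarith

theorem cos_sub_le_cos_sub_of_abs_le {α s φ : ℝ} (hα : α ≤ π) (hs : s ≤ α)
    (hφ : |φ| ≤ s) : cos (φ - α) ≤ cos (s - α) := by
  obtain ⟨hφs, hsφ⟩ := abs_le.mp hφ
  rw [← cos_neg, ← cos_neg (s - α), neg_sub, neg_sub]
  exact cos_le_cos_of_le_of_le_two_pi_sub_s6 (by linarith) (by linarith) (by linarith)

theorem eq_of_cos_sub_eq_of_abs_le {α s φ : ℝ} (hα : α < π) (hs : s ≤ α)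
    (hφ : |φ| ≤ s) (h : cos (φ - α) = cos (s - α)) : φ = s := by
  obtain ⟨hφs, hsφ⟩ := abs_le.mp hφ
  rw [← cos_neg, ← cos_neg (s - α), neg_sub, neg_sub] at h
  have := eq_of_cos_eq_of_le_of_lt_two_pi_sub (by linarith) (by linarith) (by linarith) h
  linarith

theorem hasDerivAt_eq_zero_of_nonpos_of_eq {u u' : ℝ → ℝ} {a b : ℝ}
    (hu : ∀ x ∈ Icc a b, HasDerivAt u (u' x) x) (hu' : ∀ x ∈ Ioo a b, u' x ≤ 0)
    (hab : u a = u b) : ∀ x ∈ Ioo a b, u' x = 0 := by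
  have hanti : AntitoneOn u (Icc a b) := by
    refine antitoneOn_of_hasDerivWithinAt_nonpos (f' := u') (convex_Icc a b)
      (fun x hx => (hu x hx).continuousAt.continuousWithinAt) (fun x hx => ?_) ?_
    · rw [interior_Icc] at hx ⊢
      exact (hu x (Ioo_subset_Icc_self hx)).hasDerivWithinAt
    · rwa [interior_Icc]
  intro x hx
  have hconst : u =ᶠ[nhds x] fun _ => u a := by
    filter_upwards [Ioo_mem_nhds hx.1 hx.2] with y hy
    have hya := hanti (left_mem_Icc.2 (hx.1.trans hx.2).le) (Ioo_subset_Icc_self hy) hy.1.le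
    have hyb := hanti (Ioo_subset_Icc_self hy) (right_mem_Icc.2 (hx.1.trans hx.2).le) hy.2.le
    linarith
  exact (hu x (Ioo_subset_Icc_self hx)).unique
    ((hasDerivAt_const x (u a)).congr_of_eventuallyEq hconst)

theorem HasDerivAt.re_mul_exp_neg_mul_I {f : ℝ → ℂ} {φ s : ℝ} (α : ℝ)
    (hf : HasDerivAt f (Complex.exp (φ * Complex.I)) s) :
    HasDerivAt (fun x => (f x * Complex.exp (-(α * Complex.I))).re) (Real.cos (φ - α)) s := by
  have h := Complex.reCLM.hasFDerivAt.comp_hasDerivAt s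
    (hf.mul_const (Complex.exp (-(α * Complex.I))))
  rwa [Complex.reCLM_apply, ← Complex.exp_add, ← sub_eq_add_neg, ← sub_mul,
    ← Complex.ofReal_sub, Complex.exp_ofReal_mul_I_re] at h

noncomputable def unitArc (s : ℝ) : ℂ := Complex.I - Complex.I * Complex.exp (s * Complex.I)

theorem hasDerivAt_unitArc (s : ℝ) : HasDerivAt unitArc (Complex.exp (s * Complex.I)) s := by
  have h := ((((hasDerivAt_id s).ofReal_comp).mul_const Complex.I).cexp.const_mul
    Complex.I).const_sub Complex.I
  refine h.congr_deriv ?_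
  simp only [id, Complex.ofReal_one, one_mul]
  linear_combination -Complex.exp (s * Complex.I) * Complex.I_mul_I

theorem re_sub_unitArc_mul_exp_neg_mul_I_of_mem_line {α t : ℝ} {z : ℂ}
    (hz : z = Complex.I + t * (-Complex.I * Complex.exp (α * Complex.I))) :
    ((z - unitArc α) * Complex.exp (-(α * Complex.I))).re = 0 := by
  have hunit : Complex.exp (α * Complex.I) * Complex.exp (-(α * Complex.I)) = 1 := by
    rw [← Complex.exp_add, add_neg_cancel, Complex.exp_zero]
  have hnormal : (z - unitArc α) * Complex.exp (-(α * Complex.I)) = (1 - t) * Complex.I := by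
    rw [hz, unitArc]
    linear_combination (1 - (t : ℂ)) * Complex.I * hunit
  simp [hnormal]

/-- Equality case: with κ₀ = 1, if the curve reaches the line A through i with
    direction −i·e^{iα} at length L = α, then γ is the arc of the unit circle centered
    at i joining 0 to i − i·e^{iα}: γ(s) = i − i·e^{is} for all s ∈ [0,α]. -/
theorem stmt6 (α : ℝ) (hα : α ∈ Set.Ioo 0 Real.pi)
    (γ : ℝ → ℂ) (θ : ℝ → ℝ)
    (hγ0 : γ 0 = 0) (hθ0 : θ 0 = 0)
    (hlip : ∀ s₁ ∈ Set.Icc 0 α, ∀ s₂ ∈ Set.Icc 0 α, |θ s₁ - θ s₂| ≤ |s₁ - s₂|)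
    (hγ : ∀ s ∈ Set.Icc 0 α, HasDerivAt γ (Complex.exp ((θ s : ℂ) * Complex.I)) s)
    (hend : ∃ t : ℝ, γ α = Complex.I
      + (t : ℂ) * (-Complex.I * Complex.exp ((α : ℂ) * Complex.I))) :
    ∀ s ∈ Set.Icc 0 α, γ s = Complex.I - Complex.I * Complex.exp ((s : ℂ) * Complex.I) := by
  obtain ⟨hα0, hαπ⟩ := hα
  obtain ⟨t, ht⟩ := hend
  have hθ_le : ∀ s ∈ Icc 0 α, |θ s| ≤ s := fun s hs => by
    simpa [hθ0, abs_of_nonneg hs.1] using hlip s hs 0 (left_mem_Icc.2 hα0.le)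
  set e := Complex.exp (-(α * Complex.I))
  set u : ℝ → ℝ := fun s => (γ s * e).re - (unitArc s * e).re
  have hu : ∀ s ∈ Icc 0 α, HasDerivAt u (cos (θ s - α) - cos (s - α)) s := fun s hs =>
    ((hγ s hs).re_mul_exp_neg_mul_I α).sub ((hasDerivAt_unitArc s).re_mul_exp_neg_mul_I α)
  have hu_end : u 0 = u α := by
    have huα : u α = ((γ α - unitArc α) * e).re := by simp only [u, sub_mul, Complex.sub_re]
    rw [huα, re_sub_unitArc_mul_exp_neg_mul_I_of_mem_line ht]
    simp [u, hγ0, unitArc]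
  have hu'_nonpos : ∀ s ∈ Ioo 0 α, cos (θ s - α) - cos (s - α) ≤ 0 := fun s hs =>
    sub_nonpos.2 (cos_sub_le_cos_sub_of_abs_le hαπ.le hs.2.le (hθ_le s (Ioo_subset_Icc_self hs)))
  have hθ_eq : ∀ s ∈ Ico 0 α, θ s = s := by
    rintro s ⟨hs0, hsα⟩
    rcases hs0.eq_or_lt with rfl | hs0
    · exact hθ0
    have hs : s ∈ Ioo 0 α := ⟨hs0, hsα⟩
    exact eq_of_cos_sub_eq_of_abs_le hαπ hsα.le (hθ_le s (Ioo_subset_Icc_self hs))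
      (sub_eq_zero.1 (hasDerivAt_eq_zero_of_nonpos_of_eq hu hu'_nonpos hu_end s hs))
  refine eq_of_has_deriv_right_eq (fun s hs => ?_)
    (fun s _ => (hasDerivAt_unitArc s).hasDerivWithinAt)
    (fun s hs => (hγ s hs).continuousAt.continuousWithinAt)
    (fun s _ => (hasDerivAt_unitArc s).continuousAt.continuousWithinAt) (by simp [hγ0])
  simpa only [hθ_eq s hs] using (hγ s (Ico_subset_Icc_self hs)).hasDerivWithinAt
end

section
/- Let γ : [0,L] → ℂ be a condensed curve parametrized by arc length with amplitude ω = sup θ − inf θ < π (θ the continuous tangent argument), let q ∈ ℂ be its endpoint displacement γ(L) − γ(0), and let φ̄ = (sup θ + inf θ)/2. Then L ≤ |q| · sec(ω/2). -/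
/-!
Project the displacement onto the bisecting direction `e^{iφ̄}`: the tangent `e^{iθ(s)}` makes
an angle at most `ω/2 < π/2` with it, so the projection grows at rate at least `cos (ω/2)`
and reaches `L cos (ω/2)`, while it never exceeds `|q|`.
-/

open Complex Set

theorem abs_sub_midpoint_le_of_mem_Icc {x m M : ℝ} (hx : x ∈ Icc m M) :
    |x - (M + m) / 2| ≤ (M - m) / 2 :=
  abs_le.2 ⟨by linarith [hx.1], by linarith [hx.2]⟩

theorem mul_sub_le_re_sub_of_le_re_deriv {γ γ' : ℝ → ℂ} {a b C : ℝ} (hab : a ≤ b)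
    (hγ : ∀ s ∈ Icc a b, HasDerivAt γ (γ' s) s) (hC : ∀ s ∈ Icc a b, C ≤ (γ' s).re) :
    C * (b - a) ≤ (γ b - γ a).re := by
  have hre : ∀ s ∈ Icc a b, HasDerivAt (fun t => (γ t).re) (γ' s).re s := fun s hs =>
    reCLM.hasFDerivAt.comp_hasDerivAt s (hγ s hs)
  simpa using (convex_Icc a b).mul_sub_le_image_sub_of_le_deriv
    (fun s hs => (hre s hs).continuousAt.continuousWithinAt)
    (fun s hs => (hre s (interior_subset hs)).differentiableAt.differentiableWithinAt)
    (fun s hs => (hre s (interior_subset hs)).deriv ▸ hC s (interior_subset hs))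
    a (left_mem_Icc.2 hab) b (right_mem_Icc.2 hab) hab

theorem mul_cos_le_norm_sub_of_abs_sub_le {γ : ℝ → ℂ} {θ : ℝ → ℝ} {a b φ δ : ℝ} (hab : a ≤ b)
    (hγ : ∀ s ∈ Icc a b, HasDerivAt γ (exp (θ s * I)) s)
    (hθ : ∀ s ∈ Icc a b, |θ s - φ| ≤ δ) (hδ : δ ≤ Real.pi) :
    (b - a) * Real.cos δ ≤ ‖γ b - γ a‖ := by
  set u := exp (-φ * I)
  have hrot : ∀ s ∈ Icc a b, HasDerivAt (fun t => γ t * u) (exp (θ s * I) * u) s :=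
    fun s hs => (hγ s hs).mul_const u
  have hcos : ∀ s ∈ Icc a b, Real.cos δ ≤ (exp (θ s * I) * u).re := by
    intro s hs
    rw [← exp_add, show θ s * I + -φ * I = ((θ s - φ : ℝ) : ℂ) * I by push_cast; ring,
      exp_ofReal_mul_I_re, ← Real.cos_abs (θ s - φ)]
    exact Real.cos_le_cos_of_nonneg_of_le_pi (abs_nonneg _) hδ (hθ s hs)
  have hu : ‖u‖ = 1 := by simp [u, norm_exp]
  calc (b - a) * Real.cos δ = Real.cos δ * (b - a) := mul_comm _ _
    _ ≤ ((γ b - γ a) * u).re := by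
      simpa only [sub_mul] using mul_sub_le_re_sub_of_le_re_deriv hab hrot hcos
    _ ≤ ‖(γ b - γ a) * u‖ := re_le_norm _
    _ = ‖γ b - γ a‖ := by rw [norm_mul, hu, mul_one]

/-- Length bound for a condensed curve: if the amplitude ω = sup θ − inf θ of the
    tangent argument satisfies ω < π, then L ≤ |γ(L) − γ(0)| · sec(ω/2). -/
theorem stmt12 (L : ℝ) (hL : 0 ≤ L) (γ : ℝ → ℂ) (θ : ℝ → ℝ)
    (hγ : ∀ s ∈ Set.Icc 0 L, HasDerivAt γ (Complex.exp ((θ s : ℂ) * Complex.I)) s)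
    (hθc : ContinuousOn θ (Set.Icc 0 L))
    (ω : ℝ) (hω : ω = sSup (θ '' Set.Icc 0 L) - sInf (θ '' Set.Icc 0 L))
    (hωπ : ω < Real.pi) :
    L ≤ ‖γ L - γ 0‖ / Real.cos (ω / 2) := by
  have hK : IsCompact (θ '' Icc 0 L) := isCompact_Icc.image_of_continuousOn hθc
  have hθ : ∀ s ∈ Icc 0 L, |θ s - (sSup (θ '' Icc 0 L) + sInf (θ '' Icc 0 L)) / 2| ≤ ω / 2 :=
    fun s hs => hω ▸ abs_sub_midpoint_le_of_mem_Icc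
      ⟨csInf_le hK.bddBelow (mem_image_of_mem θ hs), le_csSup hK.bddAbove (mem_image_of_mem θ hs)⟩
  have hω0 : 0 ≤ ω := by linarith [(abs_nonneg _).trans (hθ 0 ⟨le_rfl, hL⟩)]
  have hcos : 0 < Real.cos (ω / 2) :=
    Real.cos_pos_of_mem_Ioo ⟨by linarith [Real.pi_pos], by linarith⟩
  rw [le_div_iff₀ hcos]
  simpa using mul_cos_le_norm_sub_of_abs_sub_le hL hγ hθ (by linarith)
end

section
/- Let θ₁ ∈ [0,π], z = e^{iθ₁}, ω ∈ [θ₁, π], and r(ω) = 4 sin(ω/2). Suppose η : [0,L] → ℂ is parametrized by arc length with η(0) = 0, η'(0) = 1, η'(L) = z, its tangent-argument θ (θ(0)=0, θ(L)=θ₁) is 1-Lipschitz, and its amplitude sup θ − inf θ equals ω. Then |η(L) − (i(z−1))| ≥ r(ω); i.e., the endpoint of η cannot lie strictly inside the circle of radius 4 sin(ω/2) centered at −i + iz. -/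
/-!
Rotate the curve by `e^{-iφ}`, where `φ` is the midpoint of the range of `θ`, so that the
rotated tangent angle `ψ = θ - φ` ranges over `[-ω/2, ω/2] ⊆ [-π/2, π/2]`. The real part of
the rotated chord `η L - η 0` is `∫ cos ψ`, and since `ψ` is 1-Lipschitz and `cos ψ ≥ 0`, the
function `sin ψ` varies by at most `∫ cos ψ` on every subinterval. On its way from `sin ψ 0`
to `sin ψ L`, `sin ψ` visits both `sin (ω/2)` and `-sin (ω/2)`, so
`∫ cos ψ ≥ 4 sin (ω/2) - (sin ψ L - sin ψ 0)` (using `θ L ≥ θ 0` when the maximum comes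
first). The correction term is exactly the real part of the rotated centre `-i(z - 1)`, hence
`4 sin (ω/2) ≤ Re (e^{-iφ} (η L - i(z - 1))) ≤ |η L - i(z - 1)|`.
-/

open Set Real MeasureTheory

theorem ContinuousOn.intervalIntegrable_cos_comp {ψ : ℝ → ℝ} {a b : ℝ}
    (hψ : ContinuousOn ψ (uIcc a b)) : IntervalIntegrable (fun t => cos (ψ t)) volume a b :=
  (continuous_cos.comp_continuousOn hψ).intervalIntegrable

theorem abs_deriv_sin_comp_le_abs_cos {ψ : ℝ → ℝ} {s : Set ℝ} {x : ℝ} (hs : s ∈ nhds x)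
    (hψ : LipschitzOnWith 1 ψ s) (hx : DifferentiableAt ℝ ψ x) :
    |deriv (fun t => sin (ψ t)) x| ≤ |cos (ψ x)| := by
  rw [hx.hasDerivAt.sin.deriv, abs_mul]
  have hψ' := norm_deriv_le_of_lipschitzOn hs hψ
  simp only [Real.norm_eq_abs, NNReal.coe_one] at hψ'
  exact mul_le_of_le_one_right (abs_nonneg _) hψ'

theorem abs_sin_sub_sin_le_integral_cos {ψ : ℝ → ℝ} {a b : ℝ} (hab : a ≤ b)
    (hψ : LipschitzOnWith 1 ψ (Icc a b)) (hbd : ∀ t ∈ Icc a b, |ψ t| ≤ π / 2) :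
    |sin (ψ b) - sin (ψ a)| ≤ ∫ t in a..b, cos (ψ t) := by
  have hsin : AbsolutelyContinuousOnInterval (fun t => sin (ψ t)) a b := by
    refine LipschitzOnWith.absolutelyContinuousOnInterval (K := 1) ?_
    rw [uIcc_of_le hab]
    exact one_mul (1 : NNReal) ▸ lipschitzWith_sin.comp_lipschitzOnWith hψ
  have hderiv : ∀ᵐ t ∂volume.restrict (Icc a b),
      |deriv (fun t => sin (ψ t)) t| ≤ cos (ψ t) := by
    rw [← ae_restrict_congr_set Ioo_ae_eq_Icc, ae_restrict_iff' measurableSet_Ioo]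
    filter_upwards [hψ.ae_differentiableWithinAt_of_mem_of_real] with t hdiff ht
    have hnhds : Icc a b ∈ nhds t := Icc_mem_nhds ht.1 ht.2
    have hcos := cos_nonneg_of_mem_Icc (abs_le.1 (hbd t (Ioo_subset_Icc_self ht)))
    simpa only [abs_of_nonneg hcos] using abs_deriv_sin_comp_le_abs_cos hnhds hψ
      ((hdiff (Ioo_subset_Icc_self ht)).differentiableAt hnhds)
  rw [← hsin.integral_deriv_eq_sub]
  calc |∫ t in a..b, deriv (fun t => sin (ψ t)) t|
      ≤ ∫ t in a..b, |deriv (fun t => sin (ψ t)) t| :=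
        intervalIntegral.abs_integral_le_integral_abs hab
    _ ≤ ∫ t in a..b, cos (ψ t) :=
        intervalIntegral.integral_mono_ae_restrict hab hsin.intervalIntegrable_deriv.abs
          (hψ.continuousOn.mono (uIcc_of_le hab).subset).intervalIntegrable_cos_comp hderiv

theorem abs_sin_sub_sin_add_add_le_integral_cos {ψ : ℝ → ℝ} {a x y b : ℝ}
    (hax : a ≤ x) (hxy : x ≤ y) (hyb : y ≤ b)
    (hψ : LipschitzOnWith 1 ψ (Icc a b)) (hbd : ∀ t ∈ Icc a b, |ψ t| ≤ π / 2) :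
    |sin (ψ x) - sin (ψ a)| + |sin (ψ y) - sin (ψ x)| + |sin (ψ b) - sin (ψ y)|
      ≤ ∫ t in a..b, cos (ψ t) := by
  have piece : ∀ c d, a ≤ c → c ≤ d → d ≤ b →
      |sin (ψ d) - sin (ψ c)| ≤ ∫ t in c..d, cos (ψ t) := fun c d hac hcd hdb =>
    abs_sin_sub_sin_le_integral_cos hcd (hψ.mono (Icc_subset_Icc hac hdb))
      fun t ht => hbd t (Icc_subset_Icc hac hdb ht)
  have hint : ∀ c d, a ≤ c → c ≤ d → d ≤ b →
      IntervalIntegrable (fun t => cos (ψ t)) volume c d := fun c d hac hcd hdb =>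
    (hψ.continuousOn.mono (uIcc_subset_Icc ⟨hac, hcd.trans hdb⟩ ⟨hac.trans hcd, hdb⟩)
      ).intervalIntegrable_cos_comp
  rw [← intervalIntegral.integral_add_adjacent_intervals (hint a y le_rfl (hax.trans hxy) hyb)
      (hint y b (hax.trans hxy) hyb le_rfl),
    ← intervalIntegral.integral_add_adjacent_intervals (hint a x le_rfl hax (hxy.trans hyb))
      (hint x y hax hxy hyb)]
  gcongr
  · exact piece a x le_rfl hax (hxy.trans hyb)
  · exact piece x y hax hxy hyb
  · exact piece y b (hax.trans hxy) hyb le_rfl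

theorem four_sin_half_le_integral_cos_add_sin_sub_sin {ψ : ℝ → ℝ} {a b ω p q : ℝ}
    (hψ : LipschitzOnWith 1 ψ (Icc a b)) (hω : ω ≤ π)
    (hrange : ∀ t ∈ Icc a b, |ψ t| ≤ ω / 2)
    (hp : p ∈ Icc a b) (hψp : ψ p = ω / 2) (hq : q ∈ Icc a b) (hψq : ψ q = -(ω / 2))
    (hψab : ψ a ≤ ψ b) :
    4 * sin (ω / 2) ≤ (∫ t in a..b, cos (ψ t)) + sin (ψ b) - sin (ψ a) := by
  have hbd : ∀ t ∈ Icc a b, |ψ t| ≤ π / 2 := fun t ht => (hrange t ht).trans (by linarith)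
  have hsin_p : sin (ψ p) = sin (ω / 2) := by rw [hψp]
  have hsin_q : sin (ψ q) = -sin (ω / 2) := by rw [hψq, sin_neg]
  rcases le_total q p with hqp | hpq
  · have h := abs_sin_sub_sin_add_add_le_integral_cos hq.1 hqp hp.2 hψ hbd
    rw [hsin_p, hsin_q] at h
    linarith [neg_le_abs (-sin (ω / 2) - sin (ψ a)), neg_le_abs (sin (ψ b) - sin (ω / 2)),
      le_abs_self (sin (ω / 2) - -sin (ω / 2))]
  · have h := abs_sin_sub_sin_add_add_le_integral_cos hp.1 hpq hq.2 hψ hbd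
    rw [hsin_p, hsin_q] at h
    have hab : a ≤ b := hp.1.trans hp.2
    have hmono : sin (ψ a) ≤ sin (ψ b) :=
      sin_le_sin_of_le_of_le_pi_div_two (abs_le.1 (hbd a (left_mem_Icc.2 hab))).1
        (abs_le.1 (hbd b (right_mem_Icc.2 hab))).2 hψab
    linarith [le_abs_self (sin (ω / 2) - sin (ψ a)), le_abs_self (sin (ψ b) - -sin (ω / 2)),
      neg_le_abs (-sin (ω / 2) - sin (ω / 2))]

open Complex in
theorem re_exp_neg_mul_I_mul_sub_eq_integral_cos {η : ℝ → ℂ} {θ : ℝ → ℝ} {a b : ℝ}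
    (φ : ℝ) (hab : a ≤ b) (hη : ∀ s ∈ Icc a b, HasDerivAt η (exp (θ s * I)) s)
    (hθ : ContinuousOn θ (Icc a b)) :
    (exp (-φ * I) * (η b - η a)).re = ∫ t in a..b, Real.cos (θ t - φ) := by
  have hderiv : ∀ s ∈ uIcc a b,
      HasDerivAt (fun s => (exp (-φ * I) * η s).re) (Real.cos (θ s - φ)) s := by
    intro s hs
    have h := reCLM.hasFDerivAt.comp_hasDerivAt s
      ((hη s (uIcc_of_le hab ▸ hs)).const_mul (exp (-φ * I)))
    rwa [reCLM_apply, ← Complex.exp_add,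
      show -φ * I + θ s * I = ((θ s - φ : ℝ) : ℂ) * I by push_cast; ring,
      exp_ofReal_mul_I_re] at h
  rw [intervalIntegral.integral_eq_sub_of_hasDerivAt hderiv
      ((hθ.sub continuousOn_const).mono (uIcc_of_le hab).subset).intervalIntegrable_cos_comp,
    mul_sub, sub_re]

open Complex in
theorem re_exp_neg_mul_I_mul_I_mul_exp_sub_one (φ x : ℝ) :
    (exp (-φ * I) * (I * (exp (x * I) - 1))).re = Real.sin (-φ) - Real.sin (x - φ) := by
  have h : exp (-φ * I) * (I * (exp (x * I) - 1))
      = I * exp ((x - φ : ℝ) * I) - I * exp ((-φ : ℝ) * I) := by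
    rw [show ((x - φ : ℝ) : ℂ) * I = -φ * I + x * I by push_cast; ring, Complex.exp_add]
    push_cast
    ring
  rw [h, sub_re, mul_re, mul_re, exp_ofReal_mul_I_re, exp_ofReal_mul_I_im, exp_ofReal_mul_I_re,
    exp_ofReal_mul_I_im]
  simp only [I_re, zero_mul, I_im, one_mul, zero_sub, Real.sin_neg]
  ring

theorem stmt16_general (θ₁ ω L : ℝ) (h1 : 0 ≤ θ₁)
    (h4 : ω ≤ Real.pi) (hL : 0 ≤ L)
    (η : ℝ → ℂ) (θ : ℝ → ℝ)
    (hη0 : η 0 = 0) (hθ0 : θ 0 = 0) (hθL : θ L = θ₁)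
    (hη : ∀ s ∈ Set.Icc 0 L, HasDerivAt η (Complex.exp ((θ s : ℂ) * Complex.I)) s)
    (hlip : ∀ s₁ ∈ Set.Icc 0 L, ∀ s₂ ∈ Set.Icc 0 L, |θ s₁ - θ s₂| ≤ |s₁ - s₂|)
    (hamp : sSup (θ '' Set.Icc 0 L) - sInf (θ '' Set.Icc 0 L) = ω) :
    4 * Real.sin (ω / 2)
      ≤ ‖η L - Complex.I * (Complex.exp ((θ₁ : ℂ) * Complex.I) - 1)‖ := by
  have hθ : LipschitzOnWith 1 θ (Icc 0 L) :=
    .mk_one fun s hs t ht => by simpa only [Real.dist_eq] using hlip s hs t ht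
  have hK : IsCompact (θ '' Icc 0 L) := isCompact_Icc.image_of_continuousOn hθ.continuousOn
  have hne : (θ '' Icc 0 L).Nonempty := (nonempty_Icc.2 hL).image θ
  obtain ⟨p, hp, hθp⟩ := hK.sSup_mem hne
  obtain ⟨q, hq, hθq⟩ := hK.sInf_mem hne
  set φ := (sSup (θ '' Icc 0 L) + sInf (θ '' Icc 0 L)) / 2 with hφ
  have hψ : LipschitzOnWith 1 (fun t => θ t - φ) (Icc 0 L) := .mk_one fun s hs t ht => by
    simpa only [Real.dist_eq, sub_sub_sub_cancel_right] using hlip s hs t ht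
  have hrange : ∀ t ∈ Icc 0 L, |θ t - φ| ≤ ω / 2 := fun t ht =>
    abs_le.2 ⟨by linarith [hφ, csInf_le hK.bddBelow (mem_image_of_mem θ ht)],
      by linarith [hφ, le_csSup hK.bddAbove (mem_image_of_mem θ ht)]⟩
  have key := four_sin_half_le_integral_cos_add_sin_sub_sin hψ h4 hrange
    hp (by linarith) hq (by linarith) (by simpa [hθ0, hθL] using h1)
  rw [hθ0, hθL, zero_sub] at key
  set W := η L - Complex.I * (Complex.exp ((θ₁ : ℂ) * Complex.I) - 1)
  have hre : (Complex.exp (-φ * Complex.I) * W).re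
      = (∫ t in (0 : ℝ)..L, Real.cos (θ t - φ)) + Real.sin (θ₁ - φ) - Real.sin (-φ) := by
    rw [mul_sub, Complex.sub_re, ← sub_zero (η L), ← hη0,
      re_exp_neg_mul_I_mul_sub_eq_integral_cos φ hL hη hθ.continuousOn,
      re_exp_neg_mul_I_mul_I_mul_exp_sub_one]
    ring
  calc 4 * Real.sin (ω / 2) ≤ (Complex.exp (-φ * Complex.I) * W).re := hre ▸ key
    _ ≤ ‖Complex.exp (-φ * Complex.I) * W‖ := Complex.re_le_norm _
    _ = ‖W‖ := by simp [Complex.norm_exp]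

/-- If a curve in 𝓛₋₁⁺¹(Q;θ₁) has amplitude ω ∈ [θ₁, π], then its endpoint cannot lie
    strictly inside the circle of radius 4·sin(ω/2) centered at −i + iz = i(z−1). -/
theorem stmt16 (θ₁ ω L : ℝ) (h1 : 0 ≤ θ₁) (h2 : θ₁ ≤ Real.pi)
    (h3 : θ₁ ≤ ω) (h4 : ω ≤ Real.pi) (hL : 0 ≤ L)
    (η : ℝ → ℂ) (θ : ℝ → ℝ)
    (hη0 : η 0 = 0) (hθ0 : θ 0 = 0) (hθL : θ L = θ₁)
    (hη : ∀ s ∈ Set.Icc 0 L, HasDerivAt η (Complex.exp ((θ s : ℂ) * Complex.I)) s)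
    (hθc : ContinuousOn θ (Set.Icc 0 L))
    (hlip : ∀ s₁ ∈ Set.Icc 0 L, ∀ s₂ ∈ Set.Icc 0 L, |θ s₁ - θ s₂| ≤ |s₁ - s₂|)
    (hamp : sSup (θ '' Set.Icc 0 L) - sInf (θ '' Set.Icc 0 L) = ω) :
    4 * Real.sin (ω / 2)
      ≤ ‖η L - Complex.I * (Complex.exp ((θ₁ : ℂ) * Complex.I) - 1)‖ :=
  stmt16_general θ₁ ω L h1 h4 hL η θ hη0 hθ0 hθL hη hlip hamp
end
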